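/- arXiv:1912.02552 — 4 statements merged into one kernel-verified Lean document; each statement's English description precedes it below -/
import Mathlib

section
/- If (Q,T) is separable and closed with ε ∈ Q ∩ T, then the hypothesis automaton H (states Q, initial state ε, transition δ(q,a) = the unique q' ∈ Q T-equivalent to q·a, accepting states {q ∈ Q : q ∈ L}) satisfies: for every q ∈ Q, the state reached by H from the initial state on input word q is q itself (i.e., access words reach themselves). -/
/-- `v` and `w` are `T`-equivalent w.r.t. language `L`. -/
def TEquiv {α : Type*} (L : Set (List α)) (T : Set (List α)) (v w : List α) : Prop :=
  ∀ u ∈ T, (v ++ u ∈ L ↔ w ++ u ∈ L)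

theorem TEquiv.symm {α : Type*} {L T : Set (List α)} {v w : List α}
    (h : TEquiv L T v w) : TEquiv L T w v :=
  fun u hu => (h u hu).symm

theorem List.foldl_eq_self_of_append_singleton {α : Type*} {Q : Set (List α)}
    (hpref : ∀ q ∈ Q, ∀ p : List α, p <+: q → p ∈ Q) {δ : List α → α → List α}
    (hstep : ∀ p a, p ++ [a] ∈ Q → δ p a = p ++ [a]) :
    ∀ q ∈ Q, List.foldl δ [] q = q := by
  intro q
  induction q using List.reverseRecOn with
  | nil => intro _; rfl
  | append_singleton p a ih =>
    intro hpa
    have hp : p ∈ Q := hpref _ hpa p (List.prefix_append p [a])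
    rw [List.foldl_append, ih hp, List.foldl_cons, List.foldl_nil, hstep p a hpa]

theorem transition_eq_append_singleton {α : Type*} {L Q T : Set (List α)}
    (hpref : ∀ q ∈ Q, ∀ p : List α, p <+: q → p ∈ Q)
    (hsep : ∀ v ∈ Q, ∀ w ∈ Q, TEquiv L T v w → v = w)
    {δ : List α → α → List α}
    (hδ : ∀ q ∈ Q, ∀ a : α, δ q a ∈ Q ∧ TEquiv L T (q ++ [a]) (δ q a))
    {p : List α} {a : α} (hpa : p ++ [a] ∈ Q) : δ p a = p ++ [a] := by
  obtain ⟨hδQ, hequiv⟩ := hδ p (hpref _ hpa p (List.prefix_append p [a])) a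
  exact hsep _ hδQ _ hpa hequiv.symm

theorem lstar_access_words_reach_themselves_general {α : Type*}
    (L : Set (List α)) (Q T : Set (List α))
    (hpref : ∀ q ∈ Q, ∀ p : List α, p <+: q → p ∈ Q)
    (hsep : ∀ v ∈ Q, ∀ w ∈ Q, TEquiv L T v w → v = w)
    (δ : List α → α → List α)
    (hδ : ∀ q ∈ Q, ∀ a : α, δ q a ∈ Q ∧ TEquiv L T (q ++ [a]) (δ q a)) :
    ∀ q ∈ Q, List.foldl δ [] q = q :=
  List.foldl_eq_self_of_append_singleton hpref
    fun _ _ hpa => transition_eq_append_singleton hpref hsep hδ hpa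

/-- In the hypothesis automaton of L* (states `Q`, initial state `ε`, transition
`δ q a` = the unique element of `Q` that is `T`-equivalent to `q·a`), every access
word `q ∈ Q`, read from the initial state `ε`, reaches the state `q` itself.
(`Q` is the prefix-closed set of access words of the L* algorithm.) -/
theorem lstar_access_words_reach_themselves {α : Type*}
    (L : Set (List α)) (Q T : Set (List α))
    (hεQ : ([] : List α) ∈ Q) (hεT : ([] : List α) ∈ T)
    (hpref : ∀ q ∈ Q, ∀ p : List α, p <+: q → p ∈ Q)
    (hsep : ∀ v ∈ Q, ∀ w ∈ Q, TEquiv L T v w → v = w)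
    (hclosed : ∀ q ∈ Q, ∀ a : α, ∃ q' ∈ Q, TEquiv L T (q ++ [a]) q')
    (δ : List α → α → List α)
    (hδ : ∀ q ∈ Q, ∀ a : α, δ q a ∈ Q ∧ TEquiv L T (q ++ [a]) (δ q a)) :
    ∀ q ∈ Q, List.foldl δ [] q = q :=
  lstar_access_words_reach_themselves_general L Q T hpref hsep δ hδ
end

section
/- The product trajectory distribution is consistent: for any MDP M and DFA A over alphabet S, the probability of a finite state trajectory s₀s₁…sₙ under a policy ρ on the product MDP (where ρ may depend on the automaton component) equals the probability of the augmented trajectory (s₀,q₀)…(sₙ,qₙ) with the deterministically tracked automaton states qᵢ. Consequently, any history-dependent policy on M whose dependence on history factors through the DFA state can be realized as a stationary policy on the product MDP with the same trajectory distribution over S-components. -/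
open scoped BigOperators

/-- Probability of observing the future state sequence `future` in the MDP with
transition kernel `Tr`, under the (randomized) history-dependent policy `ρ`,
starting from current state `s` with past history `h` (so the full history so far
is `h ++ [s]`). -/
noncomputable def trajProbM {S A : Type*} [Fintype A]
    (Tr : S → A → S → ℝ) (ρ : List S → A → ℝ) :
    List S → S → List S → ℝ
  | _, _, [] => 1
  | h, s, s' :: rest =>
      (∑ a, ρ (h ++ [s]) a * Tr s a s') * trajProbM Tr ρ (h ++ [s]) s' rest

/-- Probability of observing the future `S`-component sequence `future` in the
product MDP (with the automaton component tracked deterministically by `δ`), under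
the stationary policy `σp` on product states, starting from product state `(s,q)`. -/
noncomputable def trajProbP {S A SA : Type*} [Fintype A]
    (Tr : S → A → S → ℝ) (δ : SA → S → SA) (σp : S × SA → A → ℝ) :
    S × SA → List S → ℝ
  | _, [] => 1
  | (s, q), s' :: rest =>
      (∑ a, σp (s, q) a * Tr s a s') * trajProbP Tr δ σp (s', δ q s') rest

/-! Since the tracked automaton state is updated by `δ` one letter at a time, at every step the
action distribution of `ρ` is that of `σp` at the current product state, so induction on the
future matches the two products factor by factor. -/

theorem trajProbM_eq_trajProbP_of_tracks {S A SA : Type*} [Fintype A]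
    (Tr : S → A → S → ℝ) (δ : SA → S → SA) (ρ : List S → A → ℝ) (σp : S × SA → A → ℝ)
    (track : List S → SA) (htrack : ∀ (h : List S) (s : S), track (h ++ [s]) = δ (track h) s)
    (hfactor : ∀ (h : List S) (s : S) (a : A), ρ (h ++ [s]) a = σp (s, track (h ++ [s])) a) :
    ∀ (future h : List S) (s : S),
      trajProbM Tr ρ h s future = trajProbP Tr δ σp (s, track (h ++ [s])) future := by
  intro future
  induction future with
  | nil => intro h s; rw [trajProbM, trajProbP]
  | cons s' rest ih =>
    intro h s
    rw [trajProbM, trajProbP, ih, htrack]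
    simp only [hfactor]

/-- Consistency of the product trajectory distribution: if a history-dependent
policy `ρ` on the MDP `M` factors through the DFA state (i.e. `ρ` depends only on
the current state and the automaton state `δ*(a₀, history)`, via the stationary
product policy `σp`), then the probability of every finite state trajectory under
`ρ` in `M` equals the probability of the corresponding augmented trajectory (with
deterministically tracked automaton states) under `σp` in the product MDP; hence
such a policy is realized as a stationary policy on the product MDP with the same
trajectory distribution over `S`-components. -/
theorem product_trajectory_distribution_consistent
    {S A SA : Type*} [Fintype A]
    (Tr : S → A → S → ℝ) (δ : SA → S → SA) (a₀ : SA)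
    (ρ : List S → A → ℝ) (σp : S × SA → A → ℝ)
    (hfactor : ∀ (h : List S) (s : S) (a : A),
      ρ (h ++ [s]) a = σp (s, List.foldl δ a₀ (h ++ [s])) a) :
    ∀ (future h : List S) (s : S),
      trajProbM Tr ρ h s future
        = trajProbP Tr δ σp (s, List.foldl δ a₀ (h ++ [s])) future :=
  trajProbM_eq_trajProbP_of_tracks Tr δ ρ σp (List.foldl δ a₀)
    (fun h s => List.foldl_concat δ a₀ s h) hfactor
end

section
/- Optimal value of the product MDP dominates: let M be an MDP with non-Markovian reward R̃ defined by a DFA A as above, and let M' be the product MDP with Markovian reward R'. Then every (possibly history-dependent) policy for M induces a policy for M' with the same expected discounted reward, and conversely; hence the optimal expected discounted value of the NMRDP M (over history-dependent policies) equals the optimal value of M' attained by a stationary deterministic policy on the product state space. -/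
open scoped BigOperators

/-- Expected reward received at step `n+1` in the MDP `M` under the
history-dependent deterministic policy `ρ`, starting from current state `s` with
past history `h` (full history so far `h ++ [s]`), where `Rt` is the
(non-Markovian) reward as a function of the full history. -/
noncomputable def expRewM {S A : Type*} [Fintype S]
    (Tr : S → A → S → ℝ) (ρ : List S → A) (Rt : List S → ℝ) :
    ℕ → List S → S → ℝ
  | 0, h, s => ∑ s', Tr s (ρ (h ++ [s])) s' * Rt (h ++ [s, s'])
  | n + 1, h, s => ∑ s', Tr s (ρ (h ++ [s])) s' * expRewM Tr ρ Rt n (h ++ [s]) s'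

/-- Expected reward received at step `n+1` in the product MDP under the stationary
policy `σp` on product states, with Markovian reward `R'` and DFA transition `δ`. -/
noncomputable def expRewP {S A SA : Type*} [Fintype S]
    (Tr : S → A → S → ℝ) (δ : SA → S → SA) (σp : S × SA → A) (R' : S × SA → ℝ) :
    ℕ → S × SA → ℝ
  | 0, (s, q) => ∑ s', Tr s (σp (s, q)) s' * R' (s', δ q s')
  | n + 1, (s, q) => ∑ s', Tr s (σp (s, q)) s' * expRewP Tr δ σp R' n (s', δ q s')

/-- Expected reward received at step `n+1` in the product MDP under a
history-dependent policy `ρ` (histories of the product MDP are in bijection with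
histories of `M`, the automaton component `q` being tracked deterministically). -/
noncomputable def expRewP' {S A SA : Type*} [Fintype S]
    (Tr : S → A → S → ℝ) (δ : SA → S → SA) (ρ : List S → A) (R' : S × SA → ℝ) :
    ℕ → List S → S → SA → ℝ
  | 0, h, s, q => ∑ s', Tr s (ρ (h ++ [s])) s' * R' (s', δ q s')
  | n + 1, h, s, q =>
      ∑ s', Tr s (ρ (h ++ [s])) s' * expRewP' Tr δ ρ R' n (h ++ [s]) s' (δ q s')

/-- Expected discounted value (rewards from step 1 on) of `ρ` in `M` from `s₀`. -/
noncomputable def valM {S A : Type*} [Fintype S]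
    (Tr : S → A → S → ℝ) (ρ : List S → A) (Rt : List S → ℝ) (γ : ℝ) (s₀ : S) : ℝ :=
  ∑' n : ℕ, γ ^ n * expRewM Tr ρ Rt n [] s₀

/-- Expected discounted value of the stationary policy `σp` in the product MDP. -/
noncomputable def valP {S A SA : Type*} [Fintype S]
    (Tr : S → A → S → ℝ) (δ : SA → S → SA) (σp : S × SA → A) (R' : S × SA → ℝ)
    (γ : ℝ) (sq : S × SA) : ℝ :=
  ∑' n : ℕ, γ ^ n * expRewP Tr δ σp R' n sq

/-- Expected discounted value of the history-dependent policy `ρ` in the product MDP. -/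
noncomputable def valP' {S A SA : Type*} [Fintype S]
    (Tr : S → A → S → ℝ) (δ : SA → S → SA) (ρ : List S → A) (R' : S × SA → ℝ)
    (γ : ℝ) (s₀ : S) (q₀ : SA) : ℝ :=
  ∑' n : ℕ, γ ^ n * expRewP' Tr δ ρ R' n [] s₀ q₀

/-!
The automaton state reached after a history `w` is `w.foldl δ a₀`, so the reward `R̃` of a
history is the Markovian reward `R'` of the product state it ends in. Hence a policy on `M` and
its image on the product MDP collect the same expected reward at every step, which gives (i)
and (ii).

For (iii), the Bellman optimality operator of the product MDP is a `γ`-contraction for the sup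
distance. Its fixed point `V` is the value of a greedy stationary policy, and it is a
supersolution of the one-step equation of every history-dependent policy. A bounded solution of
that equation lies below any supersolution: their difference `d` satisfies `d ≤ γ * sup d`.
-/

open Finset Filter Topology

theorem Finset.abs_sup'_sub_sup'_le {α : Type*} {s : Finset α} (hs : s.Nonempty) {f g : α → ℝ}
    {d : ℝ} (h : ∀ i ∈ s, |f i - g i| ≤ d) : |s.sup' hs f - s.sup' hs g| ≤ d := by
  rw [abs_sub_le_iff, sub_le_iff_le_add, sub_le_iff_le_add]
  constructor <;> refine sup'_le _ _ fun i hi => ?_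
  · linarith [(abs_sub_le_iff.1 (h i hi)).1, le_sup' g hi]
  · linarith [(abs_sub_le_iff.1 (h i hi)).2, le_sup' f hi]

theorem summable_geometric_mul_of_abs_le {γ B : ℝ} (hγ0 : 0 ≤ γ) (hγ1 : γ < 1) {f : ℕ → ℝ}
    (hf : ∀ n, |f n| ≤ B) : Summable fun n => γ ^ n * f n := by
  refine ((summable_geometric_of_lt_one hγ0 hγ1).mul_right B).of_norm_bounded fun n => ?_
  rw [Real.norm_eq_abs, abs_mul, abs_pow, abs_of_nonneg hγ0]
  exact mul_le_mul_of_nonneg_left (hf n) (pow_nonneg hγ0 n)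

theorem abs_tsum_geometric_mul_le {γ B : ℝ} (hγ0 : 0 ≤ γ) (hγ1 : γ < 1) {f : ℕ → ℝ}
    (hf : ∀ n, |f n| ≤ B) : |∑' n, γ ^ n * f n| ≤ B / (1 - γ) := by
  have hB : HasSum (fun n => γ ^ n * B) (B / (1 - γ)) := by
    simpa only [div_eq_mul_inv, mul_comm B] using (hasSum_geometric_of_lt_one hγ0 hγ1).mul_right B
  refine tsum_of_norm_bounded (f := fun n => γ ^ n * f n) hB fun n => ?_
  rw [Real.norm_eq_abs, abs_mul, abs_pow, abs_of_nonneg hγ0]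
  exact mul_le_mul_of_nonneg_left (hf n) (pow_nonneg hγ0 n)

namespace MDP

variable {ι S A : Type*} [Fintype S]

theorem sum_mul_le_of_forall_le {p f : S → ℝ} {b : ℝ} (hp : ∀ s, 0 ≤ p s)
    (hp1 : ∑ s, p s = 1) (hf : ∀ s, f s ≤ b) : ∑ s, p s * f s ≤ b :=
  calc ∑ s, p s * f s ≤ ∑ s, p s * b :=
        sum_le_sum fun s _ => mul_le_mul_of_nonneg_left (hf s) (hp s)
    _ = b := by rw [← sum_mul, hp1, one_mul]

theorem abs_sum_mul_le {p f : S → ℝ} {b : ℝ} (hp : ∀ s, 0 ≤ p s) (hp1 : ∑ s, p s = 1)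
    (hf : ∀ s, |f s| ≤ b) : |∑ s, p s * f s| ≤ b := by
  refine abs_le.2 ⟨?_, sum_mul_le_of_forall_le hp hp1 fun s => (abs_le.1 (hf s)).2⟩
  have := sum_mul_le_of_forall_le hp hp1 (f := fun s => -f s) fun s => neg_le.1 (abs_le.1 (hf s)).1
  simp only [mul_neg, sum_neg_distrib] at this
  linarith

/-- From `i`, outcome `s` has probability `p i s`, yields reward `c i s` and leads to `next i s`. -/
def bellmanOp (p c : ι → S → ℝ) (next : ι → S → ι) (γ : ℝ) (V : ι → ℝ) (i : ι) : ℝ :=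
  ∑ s, p i s * (c i s + γ * V (next i s))

variable {p c : ι → S → ℝ} {next : ι → S → ι} {γ : ℝ}

theorem bellmanOp_sub (V W : ι → ℝ) (i : ι) :
    bellmanOp p c next γ V i - bellmanOp p c next γ W i
      = γ * ∑ s, p i s * (V (next i s) - W (next i s)) := by
  simp only [bellmanOp, ← sum_sub_distrib, mul_sum]
  exact sum_congr rfl fun s _ => by ring

theorem abs_bellmanOp_sub_le (hp : ∀ i s, 0 ≤ p i s) (hp1 : ∀ i, ∑ s, p i s = 1) (hγ0 : 0 ≤ γ)
    {V W : ι → ℝ} {d : ℝ} (h : ∀ j, |V j - W j| ≤ d) (i : ι) :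
    |bellmanOp p c next γ V i - bellmanOp p c next γ W i| ≤ γ * d := by
  rw [bellmanOp_sub, abs_mul, abs_of_nonneg hγ0]
  exact mul_le_mul_of_nonneg_left (abs_sum_mul_le (hp i) (hp1 i) fun s => h _) hγ0

theorem le_of_le_bellmanOp_of_bellmanOp_le (hp : ∀ i s, 0 ≤ p i s) (hp1 : ∀ i, ∑ s, p i s = 1)
    (hγ0 : 0 ≤ γ) (hγ1 : γ < 1) {W V : ι → ℝ} (hW : ∀ i, W i ≤ bellmanOp p c next γ W i)
    (hV : ∀ i, bellmanOp p c next γ V i ≤ V i) (hbdd : BddAbove (Set.range fun i => W i - V i))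
    (i : ι) : W i ≤ V i := by
  obtain ⟨D, hD⟩ := hbdd
  rw [mem_upperBounds, Set.forall_mem_range] at hD
  have hpow : ∀ n : ℕ, ∀ j, W j - V j ≤ γ ^ n * D := by
    intro n
    induction n with
    | zero => simpa using hD
    | succ n ih =>
      intro j
      calc W j - V j ≤ bellmanOp p c next γ W j - bellmanOp p c next γ V j := by
            linarith [hW j, hV j]
        _ = γ * ∑ s, p j s * (W (next j s) - V (next j s)) := bellmanOp_sub W V j
        _ ≤ γ * (γ ^ n * D) :=
            mul_le_mul_of_nonneg_left (sum_mul_le_of_forall_le (hp j) (hp1 j) fun s => ih _) hγ0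
        _ = γ ^ (n + 1) * D := by ring
  have hlim : Tendsto (fun n => γ ^ n * D) atTop (𝓝 0) := by
    simpa using (tendsto_pow_atTop_nhds_zero_of_lt_one hγ0 hγ1).mul_const D
  exact sub_nonpos.1 (ge_of_tendsto' hlim fun n => hpow n i)

/-- `e n i` is the expected reward collected on the `(n + 1)`-st transition from `i`. -/
structure IsStepReward (p c : ι → S → ℝ) (next : ι → S → ι) (e : ℕ → ι → ℝ) : Prop where
  zero : ∀ i, e 0 i = ∑ s, p i s * c i s
  succ : ∀ n i, e (n + 1) i = ∑ s, p i s * e n (next i s)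

namespace IsStepReward

variable {e : ℕ → ι → ℝ}

theorem abs_le (he : IsStepReward p c next e) (hp : ∀ i s, 0 ≤ p i s)
    (hp1 : ∀ i, ∑ s, p i s = 1) {B : ℝ} (hc : ∀ i s, |c i s| ≤ B) (n : ℕ) (i : ι) :
    |e n i| ≤ B := by
  induction n generalizing i with
  | zero => rw [he.zero]; exact abs_sum_mul_le (hp i) (hp1 i) (hc i)
  | succ n ih => rw [he.succ]; exact abs_sum_mul_le (hp i) (hp1 i) fun s => ih _

theorem tsum_eq_bellmanOp (he : IsStepReward p c next e) (hp : ∀ i s, 0 ≤ p i s)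
    (hp1 : ∀ i, ∑ s, p i s = 1) {B : ℝ} (hc : ∀ i s, |c i s| ≤ B) (hγ0 : 0 ≤ γ) (hγ1 : γ < 1)
    (i : ι) : ∑' n, γ ^ n * e n i = bellmanOp p c next γ (fun j => ∑' n, γ ^ n * e n j) i := by
  have hsum (j : ι) : Summable fun n => γ ^ n * e n j :=
    summable_geometric_mul_of_abs_le hγ0 hγ1 fun n => he.abs_le hp hp1 hc n j
  have hshift (n : ℕ) : γ ^ (n + 1) * e (n + 1) i
      = ∑ s, p i s * (γ * (γ ^ n * e n (next i s))) := by
    rw [he.succ, mul_sum]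
    exact sum_congr rfl fun s _ => by ring
  rw [(hsum i).tsum_eq_zero_add, he.zero]
  simp only [hshift, bellmanOp, pow_zero, one_mul, mul_add, sum_add_distrib]
  rw [Summable.tsum_finsetSum fun s _ => ((hsum _).mul_left γ).mul_left _]
  simp only [tsum_mul_left]

end IsStepReward

def optBellmanOp [Fintype A] [Nonempty A] (P : ι → A → S → ℝ) (c : ι → S → ℝ)
    (next : ι → S → ι) (γ : ℝ) (V : ι → ℝ) (i : ι) : ℝ :=
  univ.sup' univ_nonempty fun a => bellmanOp (fun j => P j a) c next γ V i

variable [Fintype A] [Nonempty A] {P : ι → A → S → ℝ}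

theorem contractingWith_optBellmanOp [Fintype ι] (hP : ∀ i a s, 0 ≤ P i a s)
    (hP1 : ∀ i a, ∑ s, P i a s = 1) (hγ0 : 0 ≤ γ) (hγ1 : γ < 1) :
    ContractingWith ⟨γ, hγ0⟩ (optBellmanOp P c next γ) := by
  refine ⟨by exact_mod_cast hγ1, LipschitzWith.of_dist_le_mul fun V W => ?_⟩
  refine (dist_pi_le_iff (mul_nonneg hγ0 dist_nonneg)).2 fun i => ?_
  rw [Real.dist_eq]
  refine abs_sup'_sub_sup'_le _ fun a _ => abs_bellmanOp_sub_le (hP · a) (hP1 · a) hγ0 ?_ i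
  exact fun j => (Real.dist_eq _ _).symm.trans_le (dist_le_pi_dist V W j)

theorem exists_greedy_supersolution [Fintype ι] (hP : ∀ i a s, 0 ≤ P i a s)
    (hP1 : ∀ i a, ∑ s, P i a s = 1) (hγ0 : 0 ≤ γ) (hγ1 : γ < 1) :
    ∃ (V : ι → ℝ) (σ : ι → A),
      (∀ i a, bellmanOp (fun j => P j a) c next γ V i ≤ V i) ∧
      ∀ i, bellmanOp (fun j => P j (σ j)) c next γ V i = V i := by
  have hT := contractingWith_optBellmanOp (c := c) (next := next) hP hP1 hγ0 hγ1
  set V := ContractingWith.fixedPoint _ hT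
  have hV : optBellmanOp P c next γ V = V := hT.fixedPoint_isFixedPt
  choose σ hσ using fun i => (exists_mem_eq_sup' univ_nonempty
    fun a => bellmanOp (fun j => P j a) c next γ V i).imp fun _ h => h.2
  refine ⟨V, σ, fun i a => ?_, fun i => ?_⟩
  · exact (le_sup' (fun a => bellmanOp (fun j => P j a) c next γ V i) (mem_univ a)).trans_eq
      (congrFun hV i)
  · exact (hσ i).symm.trans (congrFun hV i)

end MDP

section Product

variable {S A SA : Type*} [Fintype S]

def prodNext (δ : SA → S → SA) (x : S × SA) (s' : S) : S × SA := (s', δ x.2 s')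

def histNext (δ : SA → S → SA) (i : List S × S × SA) (s' : S) : List S × S × SA :=
  (i.1 ++ [i.2.1], s', δ i.2.2 s')

theorem isStepReward_expRewP (Tr : S → A → S → ℝ) (δ : SA → S → SA) (σ : S × SA → A)
    (R' : S × SA → ℝ) :
    MDP.IsStepReward (fun x => Tr x.1 (σ x)) (fun x s' => R' (prodNext δ x s')) (prodNext δ)
      (expRewP Tr δ σ R') :=
  ⟨fun _ => rfl, fun _ _ => rfl⟩

theorem isStepReward_expRewP' (Tr : S → A → S → ℝ) (δ : SA → S → SA) (ρ : List S → A)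
    (R' : S × SA → ℝ) :
    MDP.IsStepReward (fun i => Tr i.2.1 (ρ (i.1 ++ [i.2.1]))) (fun i s' => R' (s', δ i.2.2 s'))
      (histNext δ) (fun n i => expRewP' Tr δ ρ R' n i.1 i.2.1 i.2.2) :=
  ⟨fun _ => rfl, fun _ _ => rfl⟩

theorem expRewM_eq_expRewP' (Tr : S → A → S → ℝ) (ρ : List S → A) {δ : SA → S → SA} {a₀ : SA}
    {Rt : List S → ℝ} {R' : S × SA → ℝ}
    (hmatch : ∀ w s', Rt (w ++ [s']) = R' (s', δ (w.foldl δ a₀) s')) (n : ℕ) (h : List S)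
    (s : S) : expRewM Tr ρ Rt n h s = expRewP' Tr δ ρ R' n h s ((h ++ [s]).foldl δ a₀) := by
  induction n generalizing h s with
  | zero =>
    refine sum_congr rfl fun s' _ => ?_
    rw [← hmatch]
    simp
  | succ n ih => simp only [expRewM, expRewP', ih, List.foldl_concat]

theorem expRewP'_eq_expRewP [Inhabited S] (Tr : S → A → S → ℝ) (δ : SA → S → SA) (a₀ : SA)
    (σ : S × SA → A) (R' : S × SA → ℝ) (n : ℕ) (h : List S) (s : S) :
    expRewP' Tr δ (fun w => σ (w.getLast!, w.foldl δ a₀)) R' n h s ((h ++ [s]).foldl δ a₀)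
      = expRewP Tr δ σ R' n (s, (h ++ [s]).foldl δ a₀) := by
  induction n generalizing h s with
  | zero => simp [expRewP', expRewP]
  | succ n ih =>
    have hlast : (h ++ [s]).getLast! = s := by simp
    simp only [expRewP', expRewP, hlast]
    exact sum_congr rfl fun s' _ => by
      simpa only [List.foldl_concat] using congrArg (Tr s _ s' * ·) (ih (h ++ [s]) s')

theorem valM_eq_valP' (Tr : S → A → S → ℝ) (ρ : List S → A) {δ : SA → S → SA} {a₀ : SA}
    {Rt : List S → ℝ} {R' : S × SA → ℝ}
    (hmatch : ∀ w s', Rt (w ++ [s']) = R' (s', δ (w.foldl δ a₀) s')) (γ : ℝ) (s₀ : S) :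
    valM Tr ρ Rt γ s₀ = valP' Tr δ ρ R' γ s₀ (δ a₀ s₀) :=
  tsum_congr fun n => congrArg _ (expRewM_eq_expRewP' Tr ρ hmatch n [] s₀)

theorem valP'_eq_valP [Inhabited S] (Tr : S → A → S → ℝ) (δ : SA → S → SA) (a₀ : SA)
    (σ : S × SA → A) (R' : S × SA → ℝ) (γ : ℝ) (s₀ : S) :
    valP' Tr δ (fun w => σ (w.getLast!, w.foldl δ a₀)) R' γ s₀ (δ a₀ s₀)
      = valP Tr δ σ R' γ (s₀, δ a₀ s₀) :=
  tsum_congr fun n => congrArg _ (expRewP'_eq_expRewP Tr δ a₀ σ R' n [] s₀)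

theorem le_valP_of_bellmanOp_eq [Fintype SA] {Tr : S → A → S → ℝ}
    (htr_nonneg : ∀ s a s', 0 ≤ Tr s a s') (htr_sum : ∀ s a, ∑ s', Tr s a s' = 1)
    {δ : SA → S → SA} {σ : S × SA → A} {R' : S × SA → ℝ} {γ : ℝ} (hγ0 : 0 ≤ γ) (hγ1 : γ < 1)
    {V : S × SA → ℝ} (hV : ∀ x, MDP.bellmanOp (fun y => Tr y.1 (σ y))
      (fun y s' => R' (prodNext δ y s')) (prodNext δ) γ V x = V x) (x : S × SA) :
    V x ≤ valP Tr δ σ R' γ x := by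
  have hR' (y : S × SA) (s' : S) : |R' (prodNext δ y s')| ≤ ∑ z, |R' z| :=
    single_le_sum (fun z _ => abs_nonneg (R' z)) (mem_univ _)
  have hp (y : S × SA) := htr_nonneg y.1 (σ y)
  have hp1 (y : S × SA) := htr_sum y.1 (σ y)
  refine MDP.le_of_le_bellmanOp_of_bellmanOp_le hp hp1 hγ0 hγ1 (fun y => (hV y).ge)
    (fun y => ?_) (Set.finite_range _).bddAbove x
  exact ((isStepReward_expRewP Tr δ σ R').tsum_eq_bellmanOp hp hp1 hR' hγ0 hγ1 y).ge

theorem valP'_le_of_bellmanOp_le [Fintype SA] {Tr : S → A → S → ℝ}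
    (htr_nonneg : ∀ s a s', 0 ≤ Tr s a s') (htr_sum : ∀ s a, ∑ s', Tr s a s' = 1)
    {δ : SA → S → SA} {R' : S × SA → ℝ} {γ : ℝ} (hγ0 : 0 ≤ γ) (hγ1 : γ < 1)
    {V : S × SA → ℝ} (hV : ∀ x a, MDP.bellmanOp (fun y => Tr y.1 a)
      (fun y s' => R' (prodNext δ y s')) (prodNext δ) γ V x ≤ V x)
    (ρ : List S → A) (s : S) (q : SA) : valP' Tr δ ρ R' γ s q ≤ V (s, q) := by
  have hR' (i : List S × S × SA) (s' : S) : |R' (s', δ i.2.2 s')| ≤ ∑ z, |R' z| :=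
    single_le_sum (fun z _ => abs_nonneg (R' z)) (mem_univ _)
  have hp (i : List S × S × SA) := htr_nonneg i.2.1 (ρ (i.1 ++ [i.2.1]))
  have hp1 (i : List S × S × SA) := htr_sum i.2.1 (ρ (i.1 ++ [i.2.1]))
  have he := isStepReward_expRewP' Tr δ ρ R'
  have hbdd : BddAbove (Set.range fun i : List S × S × SA =>
      (∑' n, γ ^ n * expRewP' Tr δ ρ R' n i.1 i.2.1 i.2.2) - V (i.2.1, i.2.2)) := by
    refine ⟨(∑ z, |R' z|) / (1 - γ) + ∑ z, |V z|, Set.forall_mem_range.2 fun i => ?_⟩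
    have hW := abs_tsum_geometric_mul_le hγ0 hγ1 fun n => he.abs_le hp hp1 hR' n i
    have hVi := single_le_sum (fun z _ => abs_nonneg (V z)) (mem_univ (i.2.1, i.2.2))
    linarith [le_abs_self (∑' n, γ ^ n * expRewP' Tr δ ρ R' n i.1 i.2.1 i.2.2),
      neg_abs_le (V (i.2.1, i.2.2))]
  exact MDP.le_of_le_bellmanOp_of_bellmanOp_le hp hp1 hγ0 hγ1
    (fun i => (he.tsum_eq_bellmanOp hp hp1 hR' hγ0 hγ1 i).le)
    (fun i => hV (i.2.1, i.2.2) (ρ (i.1 ++ [i.2.1]))) hbdd ([], s, q)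

theorem exists_valP'_le_valP [Fintype A] [Fintype SA] [Nonempty A] {Tr : S → A → S → ℝ}
    (htr_nonneg : ∀ s a s', 0 ≤ Tr s a s') (htr_sum : ∀ s a, ∑ s', Tr s a s' = 1)
    (δ : SA → S → SA) (R' : S × SA → ℝ) {γ : ℝ} (hγ0 : 0 ≤ γ) (hγ1 : γ < 1) :
    ∃ σ : S × SA → A, ∀ ρ s q, valP' Tr δ ρ R' γ s q ≤ valP Tr δ σ R' γ (s, q) := by
  obtain ⟨V, σ, hV, hVσ⟩ := MDP.exists_greedy_supersolution
    (c := fun x s' => R' (prodNext δ x s')) (next := prodNext δ)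
    (fun x a => htr_nonneg x.1 a) (fun x a => htr_sum x.1 a) hγ0 hγ1
  exact ⟨σ, fun ρ s q => (valP'_le_of_bellmanOp_le htr_nonneg htr_sum hγ0 hγ1 hV ρ s q).trans
    (le_valP_of_bellmanOp_eq htr_nonneg htr_sum hγ0 hγ1 hVσ (s, q))⟩

end Product

/-- Let `M` be a finite MDP with non-Markovian reward `R̃` given by the DFA
`(S_A, S, δ, a₀, F)` (`R̃(history) = r` iff `δ*(a₀, history) ∈ F`), and `M'` the
product MDP with Markovian reward `R'((s,q)) = r` iff `q ∈ F`. Then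
(i) every history-dependent policy `ρ` for `M` induces a (history-dependent)
policy for `M'` with the same expected discounted reward;
(ii) conversely, every stationary policy `σp` on `M'` induces a history-dependent
policy on `M` with the same expected discounted reward; and
(iii) the optimal expected discounted value of the NMRDP `M` over
history-dependent policies equals the optimal value of `M'` attained over
stationary deterministic policies on the product state space. -/
theorem nmrdp_product_value_equivalence
    {S A SA : Type*} [Fintype S] [Fintype A] [Fintype SA] [Inhabited S] [Nonempty A]
    (Tr : S → A → S → ℝ)
    (htr_nonneg : ∀ s a s', 0 ≤ Tr s a s')
    (htr_sum : ∀ s a, ∑ s', Tr s a s' = 1)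
    (δ : SA → S → SA) (a₀ : SA) (F : Set SA) [DecidablePred (· ∈ F)] (r : ℝ)
    (Rt : List S → ℝ)
    (hRt : ∀ w : List S, Rt w = if List.foldl δ a₀ w ∈ F then r else 0)
    (R' : S × SA → ℝ)
    (hR' : ∀ (s : S) (q : SA), R' (s, q) = if q ∈ F then r else 0)
    (γ : ℝ) (hγ0 : 0 ≤ γ) (hγ1 : γ < 1) :
    (∀ (ρ : List S → A) (s₀ : S),
        valM Tr ρ Rt γ s₀ = valP' Tr δ ρ R' γ s₀ (δ a₀ s₀)) ∧
    (∀ (σp : S × SA → A) (s₀ : S),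
        valM Tr (fun h => σp (h.getLast!, List.foldl δ a₀ h)) Rt γ s₀
          = valP Tr δ σp R' γ (s₀, δ a₀ s₀)) ∧
    (∀ s₀ : S,
        (⨆ ρ : List S → A, valM Tr ρ Rt γ s₀)
          = ⨆ σp : S × SA → A, valP Tr δ σp R' γ (s₀, δ a₀ s₀)) := by
  have hmatch (w : List S) (s' : S) : Rt (w ++ [s']) = R' (s', δ (w.foldl δ a₀) s') := by
    rw [hRt, hR', List.foldl_concat]
  have hM (ρ : List S → A) (s₀ : S) := valM_eq_valP' Tr ρ hmatch γ s₀
  have hP (σp : S × SA → A) (s₀ : S) :=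
    (hM _ s₀).trans (valP'_eq_valP Tr δ a₀ σp R' γ s₀)
  refine ⟨hM, hP, fun s₀ => ?_⟩
  obtain ⟨σ, hσ⟩ := exists_valP'_le_valP htr_nonneg htr_sum δ R' hγ0 hγ1
  have hle (ρ : List S → A) : valM Tr ρ Rt γ s₀ ≤ valP Tr δ σ R' γ (s₀, δ a₀ s₀) :=
    (hM ρ s₀).trans_le (hσ ρ _ _)
  have hfin : BddAbove (Set.range fun σp => valP Tr δ σp R' γ (s₀, δ a₀ s₀)) :=
    (Set.finite_range _).bddAbove
  refine le_antisymm (ciSup_le fun ρ => (hle ρ).trans (le_ciSup hfin σ)) (ciSup_le fun σp => ?_)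
  exact (hP σp s₀).symm.trans_le (le_ciSup ⟨_, Set.forall_mem_range.2 hle⟩ _)
end

section
/- A lower bound on |Q| in L*: if (Q,T) is separable then |Q| is at most the number of Myhill–Nerode equivalence classes of L; hence if L is regular with minimal DFA of n states, the set of access words Q in the L* algorithm never exceeds size n. -/
theorem TEquiv.of_forall_append_mem_iff {α : Type*} {L : Set (List α)} (T : Set (List α))
    {v w : List α} (h : ∀ u : List α, (v ++ u ∈ L ↔ w ++ u ∈ L)) : TEquiv L T v w :=
  fun u _ => h u

theorem injOn_of_separable {α β : Type*} {L T : Set (List α)} {Q : Set (List α)}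
    (hsep : ∀ v ∈ Q, ∀ w ∈ Q, TEquiv L T v w → v = w) {c : List α → β}
    (hc : ∀ v w : List α, c v = c w → ∀ u : List α, (v ++ u ∈ L ↔ w ++ u ∈ L)) :
    Set.InjOn c Q :=
  fun v hv w hw hvw => hsep v hv w hw (.of_forall_append_mem_iff T (hc v w hvw))

/-- A lower bound on `|Q|` in L*: if `(Q, T)` is separable then `|Q|` is at most
the Myhill–Nerode index of `L`. Here the Myhill–Nerode classes are given by a
classifying map `c : Σ* → Fin n` with `c v = c w` iff `v ≡_L w`
(so `L` regular with minimal DFA of `n` states); hence the set of access words in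
the L* algorithm never exceeds size `n`. -/
theorem access_words_bounded_by_nerode_index {α : Type*}
    (L : Set (List α)) (Q : Finset (List α)) (T : Set (List α))
    (hsep : ∀ v ∈ Q, ∀ w ∈ Q, TEquiv L T v w → v = w)
    (n : ℕ) (c : List α → Fin n)
    (hc : ∀ v w : List α, c v = c w ↔ ∀ u : List α, (v ++ u ∈ L ↔ w ++ u ∈ L)) :
    Q.card ≤ n := by
  have hinj : Set.InjOn c Q := injOn_of_separable hsep fun v w => (hc v w).mp
  calc Q.card ≤ (Finset.univ : Finset (Fin n)).card :=
        Finset.card_le_card_of_injOn c (fun _ _ => Finset.mem_univ _) hinj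
    _ = n := Finset.card_fin n
end
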